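/- arXiv:1602.02851 — 3 statements merged into one kernel-verified Lean document; each statement's English description precedes it below -/
import Mathlib

section
/- Let R_1 and R_2 be circulant v × v matrices with entries ±1. The pair (A,B) of subsets of Z_v determined by the positions of -1's in the first rows of R_1 and R_2 is a 2-{v;r,k;λ} supplementary difference set if and only if R_1 R_1^T + R_2 R_2^T = 4(r+k-λ) I + 2(v - 2(r+k-λ)) J, where I is the identity and J the all-ones v × v matrix. -/
def P {v : ℕ} (A : Finset (ZMod v)) (i : ZMod v) : ℕ :=
  ((A ×ˢ A).filter (fun p => p.2 - p.1 = i)).card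

def IsSDS {v : ℕ} (A B : Finset (ZMod v)) (l : ℕ) : Prop :=
  ∀ i : ZMod v, i ≠ 0 → P A i + P B i = l

/-!
Writing a ±1 entry as `1 - 2·[x ∈ A]`, the `(i, j)` entry of `R Rᵀ` for the circulant `R` of `A`
becomes `v - 4|A| + 4 P_A(i - j)`. So `R₁R₁ᵀ + R₂R₂ᵀ` has diagonal `2v` (as `P_A(0) = |A|`) and
off-diagonal entries `2v - 4(r + k) + 4(P_A + P_B)(i - j)`; these equal `2v - 4(r + k - λ)`
exactly when `P_A + P_B = λ` at every nonzero difference.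
-/

open Finset Matrix

section

variable {v : ℕ}

def signCirculant (A : Finset (ZMod v)) : Matrix (ZMod v) (ZMod v) ℤ :=
  Matrix.of fun i j => if j - i ∈ A then -1 else 1

lemma P_eq_card_filter (A : Finset (ZMod v)) (d : ZMod v) :
    P A d = #{x ∈ A | x + d ∈ A} := by
  refine card_nbij' Prod.fst (fun x => (x, x + d)) ?_ ?_ ?_ ?_
  · rintro ⟨x, y⟩
    simp only [coe_filter, mem_product, Set.mem_ofPred_eq, sub_eq_iff_eq_add']
    rintro ⟨⟨hx, hy⟩, rfl⟩
    exact ⟨hx, hy⟩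
  · intro x
    simp +contextual
  · rintro ⟨x, y⟩
    simp +contextual [sub_eq_iff_eq_add']
  · intro x
    simp

lemma P_zero (A : Finset (ZMod v)) : P A 0 = #A := by
  simp [P_eq_card_filter]

lemma sum_sign_mul_sign_add [NeZero v] (A : Finset (ZMod v)) (d : ZMod v) :
    ∑ x, (if x ∈ A then (-1 : ℤ) else 1) * (if x + d ∈ A then -1 else 1) =
      v - 4 * #A + 4 * P A d := by
  have expand : ∀ x, (if x ∈ A then (-1 : ℤ) else 1) * (if x + d ∈ A then -1 else 1) =
      1 - 2 * (if x ∈ A then 1 else 0) - 2 * (if x + d ∈ A then 1 else 0) +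
        4 * (if x ∈ A ∧ x + d ∈ A then 1 else 0) := by
    intro x
    by_cases hx : x ∈ A <;> by_cases hxd : x + d ∈ A <;> simp [hx, hxd]
  have shift : ∑ x : ZMod v, (if x + d ∈ A then (1 : ℤ) else 0) =
      ∑ x : ZMod v, (if x ∈ A then 1 else 0) :=
    Fintype.sum_equiv (Equiv.addRight d) _ _ fun _ => rfl
  simp only [expand, sum_add_distrib, sum_sub_distrib, ← mul_sum, shift, sum_boole,
    P_eq_card_filter, ← filter_filter, filter_univ_mem,
    sum_const, card_univ, ZMod.card, nsmul_eq_mul, mul_one]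
  ring

lemma signCirculant_mul_transpose_apply [NeZero v] (A : Finset (ZMod v)) (i j : ZMod v) :
    (signCirculant A * (signCirculant A)ᵀ) i j = v - 4 * #A + 4 * P A (i - j) := by
  rw [← sum_sign_mul_sign_add]
  exact Fintype.sum_equiv (Equiv.subRight i) _ _ fun x => by simp [signCirculant]

end

open Matrix in
theorem stmt10_general (v r k l : ℕ) [NeZero v] (A B : Finset (ZMod v))
    (hA : A.card = r) (hB : B.card = k) :
    IsSDS A B l ↔
      (Matrix.of fun i j : ZMod v => if j - i ∈ A then (-1 : ℤ) else 1) *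
          (Matrix.of fun i j : ZMod v => if j - i ∈ A then (-1 : ℤ) else 1)ᵀ +
        (Matrix.of fun i j : ZMod v => if j - i ∈ B then (-1 : ℤ) else 1) *
          (Matrix.of fun i j : ZMod v => if j - i ∈ B then (-1 : ℤ) else 1)ᵀ =
      (4 * ((r : ℤ) + k - l)) • (1 : Matrix (ZMod v) (ZMod v) ℤ) +
        (2 * ((v : ℤ) - 2 * ((r : ℤ) + k - l))) • Matrix.of (fun _ _ => (1 : ℤ)) := by
  change IsSDS A B l ↔
    signCirculant A * (signCirculant A)ᵀ + signCirculant B * (signCirculant B)ᵀ = _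
  subst hA hB
  simp only [← Matrix.ext_iff, Matrix.add_apply, signCirculant_mul_transpose_apply, Matrix.smul_apply,
    one_apply, of_apply, smul_eq_mul]
  constructor
  · intro h i j
    rcases eq_or_ne i j with rfl | hij
    · simp only [sub_self, P_zero, if_true]
      ring
    · rw [if_neg hij, ← h (i - j) (sub_ne_zero.2 hij)]
      push_cast
      ring
  · intro h d hd
    have hd0 := h d 0
    rw [if_neg hd, sub_zero] at hd0
    omega

open Matrix in
theorem stmt10 (v r k l : ℕ) [NeZero v] (hv : 2 < v) (A B : Finset (ZMod v))
    (hA : A.card = r) (hB : B.card = k) :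
    IsSDS A B l ↔
      (Matrix.of fun i j : ZMod v => if j - i ∈ A then (-1 : ℤ) else 1) *
          (Matrix.of fun i j : ZMod v => if j - i ∈ A then (-1 : ℤ) else 1)ᵀ +
        (Matrix.of fun i j : ZMod v => if j - i ∈ B then (-1 : ℤ) else 1) *
          (Matrix.of fun i j : ZMod v => if j - i ∈ B then (-1 : ℤ) else 1)ᵀ =
      (4 * ((r : ℤ) + k - l)) • (1 : Matrix (ZMod v) (ZMod v) ℤ) +
        (2 * ((v : ℤ) - 2 * ((r : ℤ) + k - l))) • Matrix.of (fun _ _ => (1 : ℤ)) :=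
  stmt10_general v r k l A B hA hB
end

section
/- Let v be odd and suppose there exists a 2-{v;r,k;λ} supplementary difference set (A,B) with 0 ∉ A and the property that i ∈ A implies -i ∉ A and every nonzero i satisfies i ∈ A or -i ∈ A, and suppose 4(r+k-λ) ≥ 2 and 2(v - 2(r+k-λ)) ≥ 1. Then there exists a 2v × 2v matrix M with entries ±1 such that M - I = -(M - I)^T and M M^T is block diagonal with two v × v blocks each equal to αI + βJ, where α = 4(r+k-λ) and β = 2(v - 2(r+k-λ)). -/
section Helpers

open Finset Matrix

variable {v : ℕ} [NeZero v]

noncomputable def chi (A : Finset (ZMod v)) (d : ZMod v) : ℤ := if d ∈ A then -1 else 1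

noncomputable def R (A : Finset (ZMod v)) : Matrix (ZMod v) (ZMod v) ℤ :=
  Matrix.of fun i j => chi A (j - i)

lemma chi_pm (A : Finset (ZMod v)) (d : ZMod v) : chi A d = 1 ∨ chi A d = -1 := by
  unfold chi; split
  · exact Or.inr rfl
  · exact Or.inl rfl

lemma P_neg (A : Finset (ZMod v)) (d : ZMod v) : P A (-d) = P A d := by
  unfold P
  apply Finset.card_bij (fun p _ => (p.2, p.1))
  · intro p hp
    simp only [Finset.mem_filter, Finset.mem_product] at hp ⊢
    refine ⟨⟨hp.1.2, hp.1.1⟩, ?_⟩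
    rw [show p.1 - p.2 = -(p.2 - p.1) by ring, hp.2, neg_neg]
  · intro p hp q hq hpq
    have := Prod.mk.injEq _ _ _ _ ▸ hpq
    ext <;> simp [this.1, this.2]
  · intro p hp
    simp only [Finset.mem_filter, Finset.mem_product] at hp
    have hm : (p.2, p.1) ∈ (A ×ˢ A).filter (fun q => q.2 - q.1 = -d) := by
      simp only [Finset.mem_filter, Finset.mem_product]
      refine ⟨⟨hp.1.2, hp.1.1⟩, ?_⟩
      rw [show p.1 - p.2 = -(p.2 - p.1) by ring, hp.2]
    exact ⟨(p.2, p.1), hm, rfl⟩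

lemma sumPair (A : Finset (ZMod v)) (d : ZMod v) :
    ∑ s : ZMod v, (if s ∈ A then (1:ℤ) else 0) * (if s + d ∈ A then (1:ℤ) else 0)
      = P A d := by
  have e : ∀ s : ZMod v, (if s ∈ A then (1:ℤ) else 0) * (if s + d ∈ A then (1:ℤ) else 0)
      = if s ∈ A ∧ s + d ∈ A then 1 else 0 := by
    intro s; by_cases h1 : s ∈ A <;> by_cases h2 : s + d ∈ A <;> simp [h1, h2]
  simp_rw [e, Finset.sum_boole]
  norm_cast
  apply Finset.card_bij (fun s _ => (s, s + d))
  · intro s hs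
    simp only [Finset.mem_filter, Finset.mem_univ, true_and] at hs
    simp [Finset.mem_filter, Finset.mem_product, hs.1, hs.2]
  · intro p hp q hq hpq
    exact (Prod.mk.injEq _ _ _ _ ▸ hpq).1
  · intro p hp
    simp only [Finset.mem_filter, Finset.mem_product] at hp
    refine ⟨p.1, by simp [Finset.mem_filter, hp.1.1, ← hp.2, hp.1.2], ?_⟩
    rw [← hp.2]; ext <;> simp

lemma sum_ind (A : Finset (ZMod v)) (c : ZMod v) :
    ∑ s : ZMod v, (if s + c ∈ A then (1:ℤ) else 0) = A.card := by
  refine (Fintype.sum_equiv (Equiv.addRight c) _ (fun s => if s ∈ A then (1:ℤ) else 0)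
    (fun s => rfl)).trans ?_
  simp [Finset.sum_ite_mem]

lemma corr (A : Finset (ZMod v)) (d : ZMod v) :
    ∑ s : ZMod v, chi A s * chi A (s + d) = (v : ℤ) - 4 * A.card + 4 * P A d := by
  have e : ∀ s : ZMod v, chi A s * chi A (s + d) =
      1 - 2 * (if s ∈ A then (1:ℤ) else 0) - 2 * (if s + d ∈ A then (1:ℤ) else 0)
        + 4 * ((if s ∈ A then (1:ℤ) else 0) * (if s + d ∈ A then (1:ℤ) else 0)) := by
    intro s; unfold chi; by_cases h1 : s ∈ A <;> by_cases h2 : s + d ∈ A <;>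
      simp [h1, h2]
  simp_rw [e]
  rw [Finset.sum_add_distrib, Finset.sum_sub_distrib, Finset.sum_sub_distrib,
    ← Finset.mul_sum, ← Finset.mul_sum, ← Finset.mul_sum, sumPair]
  have h0 : ∑ s : ZMod v, (if s ∈ A then (1:ℤ) else 0) = A.card := by
    simpa using sum_ind A 0
  rw [h0, sum_ind]
  simp [Finset.card_univ, ZMod.card]
  ring

lemma corr_self (A : Finset (ZMod v)) :
    ∑ s : ZMod v, chi A s * chi A s = (v : ℤ) := by
  have e : ∀ s : ZMod v, chi A s * chi A s = 1 := by
    intro s; unfold chi; split <;> ring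
  simp [e, Finset.card_univ, ZMod.card]

lemma RRt (A : Finset (ZMod v)) (i j : ZMod v) :
    (R A * (R A)ᵀ) i j = ∑ s : ZMod v, chi A s * chi A (s + (i - j)) := by
  rw [Matrix.mul_apply]
  refine (Fintype.sum_equiv (Equiv.addRight i) _ _ (fun s => ?_)).symm
  simp only [R, Matrix.transpose_apply, Matrix.of_apply, Equiv.coe_addRight]
  congr 1 <;> congr 1 <;> ring

lemma RtR (A : Finset (ZMod v)) (i j : ZMod v) :
    ((R A)ᵀ * R A) i j = ∑ s : ZMod v, chi A s * chi A (s + (j - i)) := by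
  rw [Matrix.mul_apply]
  refine (Fintype.sum_equiv (Equiv.subLeft i) _ _ (fun s => ?_)).symm
  simp only [R, Matrix.transpose_apply, Matrix.of_apply, Equiv.subLeft_apply]
  congr 1 <;> congr 1 <;> ring

lemma Rcomm (A B : Finset (ZMod v)) : R A * R B = R B * R A := by
  ext i j
  rw [Matrix.mul_apply, Matrix.mul_apply]
  refine Fintype.sum_equiv (Equiv.subLeft (i + j)) _ _ (fun t => ?_)
  simp only [R, Matrix.of_apply, Equiv.subLeft_apply]
  rw [show i + j - t - i = j - t by ring, show j - (i + j - t) = t - i by ring, mul_comm]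

end Helpers

open Matrix in
theorem stmt12 (v r k l : ℕ) [NeZero v] (hv : 2 < v) (hodd : Odd v)
    (A B : Finset (ZMod v)) (hA : A.card = r) (hB : B.card = k) (h : IsSDS A B l)
    (h0 : (0 : ZMod v) ∉ A) (hskew : ∀ i : ZMod v, i ∈ A → -i ∉ A)
    (hcov : ∀ i : ZMod v, i ≠ 0 → i ∈ A ∨ -i ∈ A)
    (hα : (2 : ℤ) ≤ 4 * ((r : ℤ) + k - l))
    (hβ : (1 : ℤ) ≤ 2 * ((v : ℤ) - 2 * ((r : ℤ) + k - l))) :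
    ∃ M : Matrix (ZMod v ⊕ ZMod v) (ZMod v ⊕ ZMod v) ℤ,
      (∀ i j, M i j = 1 ∨ M i j = -1) ∧
      M - 1 = -(M - 1)ᵀ ∧
      M * Mᵀ =
        Matrix.fromBlocks
          ((4 * ((r : ℤ) + k - l)) • (1 : Matrix (ZMod v) (ZMod v) ℤ) +
            (2 * ((v : ℤ) - 2 * ((r : ℤ) + k - l))) • Matrix.of (fun _ _ => (1 : ℤ)))
          0 0
          ((4 * ((r : ℤ) + k - l)) • (1 : Matrix (ZMod v) (ZMod v) ℤ) +
            (2 * ((v : ℤ) - 2 * ((r : ℤ) + k - l))) • Matrix.of (fun _ _ => (1 : ℤ))) := by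
  classical
  have chi0 : chi A 0 = 1 := by unfold chi; simp [h0]
  have chineg : ∀ d : ZMod v, d ≠ 0 → chi A (-d) = -chi A d := by
    intro d hd
    unfold chi
    by_cases hdA : d ∈ A
    · simp [hdA, hskew d hdA]
    · rcases hcov d hd with h1 | h1
      · exact absurd h1 hdA
      · simp [hdA, h1]
  -- the key diagonal block computation
  have hkey : ∀ d : ZMod v, d ≠ 0 →
      ((v : ℤ) - 4 * A.card + 4 * P A d) + ((v : ℤ) - 4 * B.card + 4 * P B d)
        = 2 * ((v : ℤ) - 2 * ((r : ℤ) + k - l)) := by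
    intro d hd
    have := h d hd
    have hc : (P A d : ℤ) + (P B d : ℤ) = (l : ℤ) := by exact_mod_cast this
    rw [hA, hB]
    linarith
  have hdiag : ∀ (RR : Matrix (ZMod v) (ZMod v) ℤ),
      (∀ i j : ZMod v, i ≠ j → RR i j =
        ((v : ℤ) - 4 * A.card + 4 * P A (i - j)) + ((v : ℤ) - 4 * B.card + 4 * P B (i - j))) →
      (∀ i : ZMod v, RR i i = 2 * (v : ℤ)) →
      RR = (4 * ((r : ℤ) + k - l)) • (1 : Matrix (ZMod v) (ZMod v) ℤ) +
            (2 * ((v : ℤ) - 2 * ((r : ℤ) + k - l))) • Matrix.of (fun _ _ => (1 : ℤ)) := by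
    intro RR hoff hdia
    ext i j
    simp only [Matrix.add_apply, Matrix.smul_apply, Matrix.one_apply, Matrix.of_apply,
      smul_eq_mul]
    by_cases hij : i = j
    · subst hij
      rw [hdia i, if_pos rfl]
      ring
    · rw [hoff i j hij, if_neg hij,
        hkey (i - j) (sub_ne_zero.mpr hij)]
      ring
  refine ⟨Matrix.fromBlocks (R A) (R B) (-(R B)ᵀ) (R A)ᵀ, ?_, ?_, ?_⟩
  · rintro (i | i) (j | j) <;>
      simp only [Matrix.fromBlocks_apply₁₁, Matrix.fromBlocks_apply₁₂,
        Matrix.fromBlocks_apply₂₁, Matrix.fromBlocks_apply₂₂, Matrix.neg_apply,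
        Matrix.transpose_apply, R, Matrix.of_apply]
    · exact chi_pm A _
    · exact chi_pm B _
    · rcases chi_pm B (i - j) with hc | hc <;> rw [hc]
      · exact Or.inr rfl
      · exact Or.inl (by ring)
    · exact chi_pm A _
  · ext i j
    simp only [Matrix.sub_apply, Matrix.neg_apply, Matrix.transpose_apply]
    rcases i with i | i <;> rcases j with j | j <;>
      simp only [Matrix.fromBlocks_apply₁₁, Matrix.fromBlocks_apply₁₂,
        Matrix.fromBlocks_apply₂₁, Matrix.fromBlocks_apply₂₂, Matrix.neg_apply,
        Matrix.transpose_apply, R, Matrix.of_apply, Matrix.one_apply,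
        Sum.inl.injEq, Sum.inr.injEq, reduceCtorEq, if_false]
    · by_cases hij : i = j
      · subst hij; simp [chi0]
      · rw [if_neg hij, if_neg (fun hh : j = i => hij hh.symm)]
        have hneg := chineg (j - i) (sub_ne_zero.mpr (Ne.symm hij))
        rw [show i - j = -(j - i) by ring, hneg]; ring
    · ring
    · ring
    · by_cases hij : i = j
      · subst hij; simp [chi0]
      · rw [if_neg hij, if_neg (fun hh : j = i => hij hh.symm)]
        have hneg := chineg (i - j) (sub_ne_zero.mpr hij)
        rw [show j - i = -(i - j) by ring, hneg]; ring
  · rw [Matrix.fromBlocks_transpose, Matrix.fromBlocks_multiply]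
    have h12 : R A * (-(R B)ᵀ)ᵀ + R B * (R A)ᵀᵀ = 0 := by
      rw [Matrix.transpose_neg, Matrix.transpose_transpose, Matrix.transpose_transpose,
        Matrix.mul_neg, Rcomm A B]
      exact neg_add_cancel _
    have h21 : -(R B)ᵀ * (R A)ᵀ + (R A)ᵀ * (R B)ᵀ = 0 := by
      rw [Matrix.neg_mul, ← Matrix.transpose_mul, ← Matrix.transpose_mul, Rcomm A B]
      exact neg_add_cancel _
    have h11 : R A * (R A)ᵀ + R B * (R B)ᵀ =
        (4 * ((r : ℤ) + k - l)) • (1 : Matrix (ZMod v) (ZMod v) ℤ) +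
          (2 * ((v : ℤ) - 2 * ((r : ℤ) + k - l))) • Matrix.of (fun _ _ => (1 : ℤ)) := by
      apply hdiag
      · intro i j hij
        rw [Matrix.add_apply, RRt, RRt, corr, corr]
      · intro i
        rw [Matrix.add_apply, RRt, RRt]
        simp only [sub_self, add_zero]
        rw [corr_self, corr_self]; ring
    have h22 : -(R B)ᵀ * (-(R B)ᵀ)ᵀ + (R A)ᵀ * (R A)ᵀᵀ =
        (4 * ((r : ℤ) + k - l)) • (1 : Matrix (ZMod v) (ZMod v) ℤ) +
          (2 * ((v : ℤ) - 2 * ((r : ℤ) + k - l))) • Matrix.of (fun _ _ => (1 : ℤ)) := by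
      rw [Matrix.transpose_neg, Matrix.transpose_transpose, Matrix.transpose_transpose,
        Matrix.neg_mul, Matrix.mul_neg, neg_neg]
      apply hdiag
      · intro i j hij
        rw [Matrix.add_apply, RtR, RtR, corr, corr]
        have hPA : P A (j - i) = P A (i - j) := by
          rw [show i - j = -(j - i) by ring, P_neg]
        have hPB : P B (j - i) = P B (i - j) := by
          rw [show i - j = -(j - i) by ring, P_neg]
        rw [hPA, hPB]; ring
      · intro i
        rw [Matrix.add_apply, RtR, RtR]
        simp only [sub_self, add_zero]
        rw [corr_self, corr_self]; ring
    rw [h11, h12, h21, h22]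
end

section
/- Let p be a prime with p ≡ 3 (mod 4) and let Q be the set of nonzero quadratic residues modulo p. Then the pair (Z_p \ (Q ∪ {0}), ∅) is a skew-symmetric 2-{p; (p-1)/2, 0; (p-3)/4} supplementary difference set: writing A for the set of nonresidues, one has 0 ∉ A, i ∈ A implies -i ∉ A, |A| = (p-1)/2, and P_A(i) = (p-3)/4 for every nonzero i ∈ Z_p. -/
/-!
Multiplying by a nonzero square preserves the set `A` of nonresidues, hence preserves `P_A`, and
`P_A(-i) = P_A(i)` by swapping the pairs. Since `-1` is a nonresidue, every nonzero `i` is `±` a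
square, so `P_A` is constant on `i ≠ 0`. Counting all pairs of `A × A` then gives
`(p - 1) P_A(1) + |A| = |A|²`, where `2|A| = p - 1` because negation swaps residues and
nonresidues.
-/

namespace P

variable {v : ℕ} (A : Finset (ZMod v))

theorem neg (i : ZMod v) : P A (-i) = P A i := by
  refine Finset.card_nbij' Prod.swap Prod.swap ?_ ?_ (fun _ _ => rfl) (fun _ _ => rfl) <;>
  · intro q
    simp only [Finset.coe_filter, Finset.mem_product, Set.mem_ofPred_eq, Prod.fst_swap,
      Prod.snd_swap]
    rintro ⟨⟨h₁, h₂⟩, h⟩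
    exact ⟨⟨h₂, h₁⟩, by linear_combination -h⟩

theorem unit_mul_of_forall_mul_mem_iff (u : (ZMod v)ˣ) (hA : ∀ x, (u : ZMod v) * x ∈ A ↔ x ∈ A)
    (i : ZMod v) : P A (u * i) = P A i := by
  refine Finset.card_nbij' (fun q => (↑u⁻¹ * q.1, ↑u⁻¹ * q.2)) (fun q => (↑u * q.1, ↑u * q.2))
    ?_ ?_ (fun _ _ => by simp) (fun _ _ => by simp)
  all_goals
    intro q
    simp only [Finset.coe_filter, Finset.mem_product, Set.mem_ofPred_eq]
    rintro ⟨⟨h₁, h₂⟩, h⟩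
  · refine ⟨⟨(hA _).1 ?_, (hA _).1 ?_⟩, ?_⟩
    · rwa [Units.mul_inv_cancel_left]
    · rwa [Units.mul_inv_cancel_left]
    · rw [← mul_sub, h, Units.inv_mul_cancel_left]
  · exact ⟨⟨(hA _).2 h₁, (hA _).2 h₂⟩, by rw [← mul_sub, h]⟩

theorem zero : P A 0 = A.card := by
  refine (Finset.card_nbij' (fun x => (x, x)) Prod.fst ?_ ?_ (fun _ _ => rfl) ?_).symm
  · intro x hx
    simpa using hx
  · intro q
    simp only [Finset.coe_filter, Finset.mem_product, Set.mem_ofPred_eq]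
    exact fun h => h.1.1
  · intro q
    simp only [Finset.coe_filter, Finset.mem_product, Set.mem_ofPred_eq, sub_eq_zero]
    exact fun h => Prod.ext rfl h.2.symm

variable [NeZero v]

theorem sum_eq_card_sq : ∑ i, P A i = A.card ^ 2 := by
  rw [sq, ← Finset.card_product]
  exact (Finset.card_eq_sum_card_fiberwise (fun _ _ => Finset.mem_coe.2 (Finset.mem_univ _))).symm

theorem card_sq_eq_of_forall_ne_zero_eq {c : ℕ} (hc : ∀ i ≠ 0, P A i = c) :
    (v - 1) * c + A.card = A.card ^ 2 := by
  rw [← sum_eq_card_sq, ← Finset.add_sum_erase _ _ (Finset.mem_univ 0), zero,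
    Finset.sum_congr rfl fun i hi => hc i (Finset.ne_of_mem_erase hi), Finset.sum_const,
    Finset.card_erase_of_mem (Finset.mem_univ _), Finset.card_univ, ZMod.card, smul_eq_mul, add_comm]

end P

section Nonsquares

open scoped Pointwise

variable {F : Type*} [Field F] [Fintype F] [DecidableEq F] {A : Finset F}

theorem quadraticChar_neg_of_not_isSquare_neg_one (h : ¬IsSquare (-1 : F)) (x : F) :
    quadraticChar F (-x) = -quadraticChar F x := by
  rw [neg_eq_neg_one_mul, map_mul, quadraticChar_neg_one_iff_not_isSquare.2 h, neg_one_mul]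

variable (hA : ∀ x, x ∈ A ↔ x ≠ 0 ∧ ¬IsSquare x)
include hA

theorem mem_iff_quadraticChar_eq_neg_one {x : F} : x ∈ A ↔ quadraticChar F x = -1 := by
  rw [hA, quadraticChar_neg_one_iff_not_isSquare]
  exact and_iff_right_of_imp fun hx h0 => hx (h0 ▸ IsSquare.zero)

theorem neg_notMem_of_mem (h : ¬IsSquare (-1 : F)) {x : F} (hx : x ∈ A) : -x ∉ A := by
  rw [mem_iff_quadraticChar_eq_neg_one hA] at hx ⊢
  rw [quadraticChar_neg_of_not_isSquare_neg_one h, hx]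
  decide

theorem two_mul_card_nonsquares (h : ¬IsSquare (-1 : F)) :
    2 * A.card = Fintype.card F - 1 := by
  have hunion : A ∪ -A = Finset.univ.erase 0 := by
    ext x
    rw [Finset.mem_union, Finset.mem_neg', Finset.mem_erase, mem_iff_quadraticChar_eq_neg_one hA,
      mem_iff_quadraticChar_eq_neg_one hA, quadraticChar_neg_of_not_isSquare_neg_one h,
      neg_eq_iff_eq_neg, neg_neg]
    simp only [Finset.mem_univ, and_true]
    refine ⟨?_, fun hx => (quadraticChar_dichotomy hx).symm⟩
    rintro hx rfl
    simp at hx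
  have hdisj : Disjoint A (-A) := by
    rw [Finset.disjoint_left]
    exact fun x hx hx' => neg_notMem_of_mem hA h hx (Finset.mem_neg'.1 hx')
  rw [two_mul]
  nth_rw 2 [← Finset.card_neg A]
  rw [← Finset.card_union_of_disjoint hdisj, hunion,
    Finset.card_erase_of_mem (Finset.mem_univ _), Finset.card_univ]

theorem sq_mul_mem_iff {y : F} (hy : y ≠ 0) (x : F) : y ^ 2 * x ∈ A ↔ x ∈ A := by
  rw [mem_iff_quadraticChar_eq_neg_one hA, mem_iff_quadraticChar_eq_neg_one hA, map_mul,
    quadraticChar_sq_one' hy, one_mul]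

end Nonsquares

section ZModPrime

variable {p : ℕ} [Fact p.Prime] {A : Finset (ZMod p)} (hA : ∀ x, x ∈ A ↔ x ≠ 0 ∧ ¬IsSquare x)
  (h : ¬IsSquare (-1 : ZMod p))
include hA h

theorem P_nonsquares_eq_P_one {i : ZMod p} (hi : i ≠ 0) : P A i = P A 1 := by
  have of_isSquare : ∀ {j : ZMod p}, j ≠ 0 → IsSquare j → P A j = P A 1 := by
    rintro j hj ⟨r, rfl⟩
    have hr : r ≠ 0 := left_ne_zero_of_mul hj
    simpa [sq] using P.unit_mul_of_forall_mul_mem_iff A (Units.mk0 (r ^ 2) (pow_ne_zero 2 hr))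
      (sq_mul_mem_iff hA hr) 1
  by_cases hsq : IsSquare i
  · exact of_isSquare hi hsq
  · have hneg : -i ∉ A := neg_notMem_of_mem hA h ((hA i).2 ⟨hi, hsq⟩)
    rw [hA, not_and_not_right] at hneg
    rw [← P.neg, of_isSquare (neg_ne_zero.2 hi) (hneg (neg_ne_zero.2 hi))]

theorem four_mul_P_nonsquares_add_three {i : ZMod p} (hi : i ≠ 0) : 4 * P A i + 3 = p := by
  have hcard := two_mul_card_nonsquares hA h
  have hsum := P.card_sq_eq_of_forall_ne_zero_eq A fun j hj => P_nonsquares_eq_P_one hA h hj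
  rw [ZMod.card] at hcard
  rw [P_nonsquares_eq_P_one hA h hi]
  have hm : 0 < A.card := by
    have := (Fact.out : p.Prime).two_le
    omega
  have : 2 * P A 1 + 1 = A.card :=
    Nat.eq_of_mul_eq_mul_left hm (by rw [← hcard] at hsum; linarith)
  omega

end ZModPrime

open scoped Classical in
theorem stmt13 (p : ℕ) [Fact (Nat.Prime p)] (hp4 : p % 4 = 3)
    (A : Finset (ZMod p))
    (hAdef : A = Finset.univ.filter (fun i : ZMod p => i ≠ 0 ∧ ¬ IsSquare i)) :
    (0 : ZMod p) ∉ A ∧ (∀ i : ZMod p, i ∈ A → -i ∉ A) ∧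
      A.card = (p - 1) / 2 ∧
      (∀ i : ZMod p, i ≠ 0 → P A i = (p - 3) / 4) := by
  have hA : ∀ x, x ∈ A ↔ x ≠ 0 ∧ ¬IsSquare x := by simp [hAdef]
  have h : ¬IsSquare (-1 : ZMod p) := by rwa [ZMod.exists_sq_eq_neg_one_iff, not_not]
  refine ⟨fun h0 => ((hA 0).1 h0).1 rfl, fun i => neg_notMem_of_mem hA h, ?_, fun i hi => ?_⟩
  · have := two_mul_card_nonsquares hA h
    rw [ZMod.card] at this
    omega
  · have := four_mul_P_nonsquares_add_three hA h hi
    omega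
end
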